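/- arXiv:1901.02552 — 3 statements merged into one kernel-verified Lean document; each statement's English description precedes it below -/
import Mathlib

section
/- In the single-resource prophet model with correlated arrivals, the process (Z_t)_{t=0,…,T} defined by Z_t = h_t + Σ_{t'=1}^{t} Σ_{i=1}^I p_{it'} (r_{it'} − h_{t'})^+ is a submartingale with respect to the filtration (ℱ_t)_{t=0,…,T}. -/
/-!
Write `N_t = Σ_{t' > t} Σ_i r_{it'} p_{it'}` and `D_t = 1 + T̄ - Σ_{t' ≤ t} Σ_i p_{it'}`, so that
`h_t D_t = E[N_t | ℱ_t]` and `D_t = D_{t+1} + Σ_i p_{i,t+1} ≥ 1`. Since `r ≤ x + D (r - x)⁺` for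
`D ≥ 1`, pointwise
`Σ_i r_{i,t+1} p_{i,t+1} + D_{t+1} h_{t+1} ≤ D_t (h_{t+1} + Σ_i p_{i,t+1} (r_{i,t+1} - h_{t+1})⁺)`.
The left side has conditional expectation `E[N_t | ℱ_t] = D_t h_t` given `ℱ_t`, and `D_t` is
`ℱ_t`-measurable, so dividing by `D_t` gives `h_t ≤ E[Z_{t+1} - Z_t + h_t | ℱ_t]`. Freezing `Z`
after time `T` turns this one-step inequality into a submartingale indexed by `ℕ`.
-/

open MeasureTheory ProbabilityTheory Finset

section

variable {Ω : Type*} {m0 : MeasurableSpace Ω} {μ : Measure Ω}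

theorem submartingale_comp_min_of_le_condExp_succ [IsFiniteMeasure μ] {ℱ : Filtration ℕ m0}
    {f : ℕ → Ω → ℝ} {T : ℕ} (hadp : ∀ t ≤ T, StronglyMeasurable[ℱ t] (f t))
    (hint : ∀ t ≤ T, Integrable (f t) μ) (hstep : ∀ t < T, f t ≤ᵐ[μ] μ[f (t + 1) | ℱ t]) :
    Submartingale (fun t => f (min t T)) ℱ μ := by
  refine submartingale_nat (fun t => (hadp _ (min_le_right t T)).mono (ℱ.mono (min_le_left t T)))
    (fun t => hint _ (min_le_right t T)) fun t => ?_
  rcases lt_or_ge t T with htT | hTt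
  · simpa only [min_eq_left htT.le, min_eq_left (Nat.succ_le_of_lt htT)] using hstep t htT
  · rw [min_eq_right hTt, min_eq_right (hTt.trans t.le_succ),
      condExp_of_stronglyMeasurable (ℱ.le t) ((hadp T le_rfl).mono (ℱ.mono hTt)) (hint T le_rfl)]

theorem condExp_div_le_condExp {m : MeasurableSpace Ω} {X Y D : Ω → ℝ}
    (hD : StronglyMeasurable[m] D) (hD_pos : ∀ᵐ ω ∂μ, 0 < D ω) (hX : Integrable X μ)
    (hY : Integrable Y μ) (hDY : Integrable (D * Y) μ) (hXY : X ≤ᵐ[μ] D * Y) :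
    (fun ω => μ[X | m] ω / D ω) ≤ᵐ[μ] μ[Y | m] := by
  filter_upwards [condExp_mono (m := m) hX hDY hXY,
    condExp_mul_of_stronglyMeasurable_left hD hDY hY, hD_pos] with ω hle heq hpos
  rw [div_le_iff₀ hpos, mul_comm]
  exact hle.trans_eq heq

theorem condExp_add_condExp_of_le {m₁ m₂ : MeasurableSpace Ω} {f g : Ω → ℝ} (hm : m₁ ≤ m₂)
    (hm₂ : m₂ ≤ m0) [SigmaFinite (μ.trim hm₂)] (hf : Integrable f μ) (hg : Integrable g μ) :
    μ[f + μ[g | m₂] | m₁] =ᵐ[μ] μ[f + g | m₁] := by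
  filter_upwards [condExp_add hf (integrable_condExp (m := m₂) (f := g)) m₁,
    condExp_condExp_of_le (f := g) hm hm₂, condExp_add hf hg m₁] with ω h1 h2 h3
  rw [h1, h3, Pi.add_apply, h2, Pi.add_apply]

theorem sum_mul_add_mul_le_mul_add_sum_mul_max {ι : Type*} (s : Finset ι) (r p : ι → ℝ)
    (hp : ∀ i ∈ s, 0 ≤ p i) {d x : ℝ} (hd : 1 ≤ d + ∑ i ∈ s, p i) :
    ∑ i ∈ s, r i * p i + d * x ≤ (d + ∑ i ∈ s, p i) * (x + ∑ i ∈ s, p i * max (r i - x) 0) := by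
  set D := d + ∑ i ∈ s, p i
  have hterm : ∀ i ∈ s, r i * p i ≤ p i * x + D * (p i * max (r i - x) 0) := by
    intro i hi
    have : r i ≤ x + D * max (r i - x) 0 := by
      nlinarith [le_max_left (r i - x) 0, le_max_right (r i - x) 0]
    nlinarith [hp i hi]
  calc ∑ i ∈ s, r i * p i + d * x
      ≤ ∑ i ∈ s, (p i * x + D * (p i * max (r i - x) 0)) + d * x := by
        gcongr with i hi; exact hterm i hi
    _ = D * (x + ∑ i ∈ s, p i * max (r i - x) 0) := by
        rw [sum_add_distrib, ← sum_mul, ← mul_sum]; ring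

variable {I : ℕ}

def futureReward (r : Fin I → ℕ → ℝ) (p : Fin I → ℕ → Ω → ℝ) (T t : ℕ) (ω : Ω) : ℝ :=
  ∑ t' ∈ Icc (t + 1) T, ∑ i, r i t' * p i t' ω

def remainingBudget (Tbar : ℝ) (p : Fin I → ℕ → Ω → ℝ) (t : ℕ) (ω : Ω) : ℝ :=
  1 + Tbar - ∑ t' ∈ Icc 1 t, ∑ i, p i t' ω

noncomputable def threshold (μ : Measure Ω) (ℱ : Filtration ℕ m0) (r : Fin I → ℕ → ℝ)
    (p : Fin I → ℕ → Ω → ℝ) (T : ℕ) (Tbar : ℝ) (t : ℕ) (ω : Ω) : ℝ :=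
  μ[futureReward r p T t | ℱ t] ω / remainingBudget Tbar p t ω

noncomputable def thresholdGain (μ : Measure Ω) (ℱ : Filtration ℕ m0) (r : Fin I → ℕ → ℝ)
    (p : Fin I → ℕ → Ω → ℝ) (T : ℕ) (Tbar : ℝ) (t : ℕ) (ω : Ω) : ℝ :=
  ∑ i, p i t ω * max (r i t - threshold μ ℱ r p T Tbar t ω) 0

noncomputable def zProcess (μ : Measure Ω) (ℱ : Filtration ℕ m0) (r : Fin I → ℕ → ℝ)
    (p : Fin I → ℕ → Ω → ℝ) (T : ℕ) (Tbar : ℝ) (t : ℕ) (ω : Ω) : ℝ :=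
  threshold μ ℱ r p T Tbar t ω + ∑ t' ∈ Icc 1 t, thresholdGain μ ℱ r p T Tbar t' ω

variable {ℱ : Filtration ℕ m0} {r : Fin I → ℕ → ℝ} {p : Fin I → ℕ → Ω → ℝ} {T t : ℕ} {Tbar : ℝ}

theorem futureReward_eq_add (ht : t + 1 ≤ T) (ω : Ω) :
    futureReward r p T t ω = ∑ i, r i (t + 1) * p i (t + 1) ω + futureReward r p T (t + 1) ω := by
  rw [futureReward, futureReward, Icc_eq_cons_Ioc ht, sum_cons, ← Icc_add_one_left_eq_Ioc]

theorem remainingBudget_eq_add (ω : Ω) :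
    remainingBudget Tbar p t ω = remainingBudget Tbar p (t + 1) ω + ∑ i, p i (t + 1) ω := by
  rw [remainingBudget, remainingBudget, sum_Icc_succ_top (by omega)]
  ring

theorem remainingBudget_le (hp0 : ∀ i t ω, 0 ≤ p i t ω) (ω : Ω) :
    remainingBudget Tbar p t ω ≤ 1 + Tbar :=
  sub_le_self _ (sum_nonneg fun t' _ => sum_nonneg fun i _ => hp0 i t' ω)

theorem ae_one_le_remainingBudget (hp0 : ∀ i t ω, 0 ≤ p i t ω)
    (hp_Tbar : ∀ᵐ ω ∂μ, ∑ t ∈ Icc 1 T, ∑ i, p i t ω ≤ Tbar) :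
    ∀ᵐ ω ∂μ, ∀ t ≤ T, 1 ≤ remainingBudget Tbar p t ω := by
  filter_upwards [hp_Tbar] with ω hω t ht
  have : ∑ t' ∈ Icc 1 t, ∑ i, p i t' ω ≤ ∑ t' ∈ Icc 1 T, ∑ i, p i t' ω :=
    sum_le_sum_of_subset_of_nonneg (Icc_subset_Icc le_rfl ht)
      fun t' _ _ => sum_nonneg fun i _ => hp0 i t' ω
  rw [remainingBudget]
  linarith

theorem measurable_arrival_of_le (hp_meas : ∀ i, ∀ t ∈ Icc 1 T, Measurable[ℱ t] (p i t))
    {i : Fin I} {t' : ℕ} (ht' : t' ∈ Icc 1 t) (ht : t ≤ T) :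
    Measurable[ℱ t] (p i t') :=
  (hp_meas i t' (Icc_subset_Icc le_rfl ht ht')).mono (ℱ.mono (mem_Icc.1 ht').2) le_rfl

theorem measurable_remainingBudget (hp_meas : ∀ i, ∀ t ∈ Icc 1 T, Measurable[ℱ t] (p i t))
    (ht : t ≤ T) : Measurable[ℱ t] (remainingBudget Tbar p t) :=
  measurable_const.sub (Finset.measurable_fun_sum _ fun _ ht' =>
    Finset.measurable_fun_sum _ fun _ _ => measurable_arrival_of_le hp_meas ht' ht)

theorem stronglyMeasurable_threshold (hp_meas : ∀ i, ∀ t ∈ Icc 1 T, Measurable[ℱ t] (p i t))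
    (ht : t ≤ T) :
    StronglyMeasurable[ℱ t] (threshold μ ℱ r p T Tbar t) :=
  (stronglyMeasurable_condExp.measurable.div
    (measurable_remainingBudget hp_meas ht)).stronglyMeasurable

theorem measurable_thresholdGain (hp_meas : ∀ i, ∀ t ∈ Icc 1 T, Measurable[ℱ t] (p i t))
    (ht : t ∈ Icc 1 T) :
    Measurable[ℱ t] (thresholdGain μ ℱ r p T Tbar t) :=
  Finset.measurable_fun_sum _ fun i _ =>
    (hp_meas i t ht).mul ((measurable_const.sub
      (stronglyMeasurable_threshold hp_meas (mem_Icc.1 ht).2).measurable).max measurable_const)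

theorem stronglyMeasurable_zProcess (hp_meas : ∀ i, ∀ t ∈ Icc 1 T, Measurable[ℱ t] (p i t))
    (ht : t ≤ T) :
    StronglyMeasurable[ℱ t] (zProcess μ ℱ r p T Tbar t) :=
  (stronglyMeasurable_threshold hp_meas ht).add <| Finset.stronglyMeasurable_fun_sum _
    fun _ ht' => ((measurable_thresholdGain hp_meas (Icc_subset_Icc le_rfl ht ht')).mono
      (ℱ.mono (mem_Icc.1 ht').2) le_rfl).stronglyMeasurable

theorem integrable_threshold (hp_meas : ∀ i, ∀ t ∈ Icc 1 T, Measurable[ℱ t] (p i t))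
    (hp0 : ∀ i t ω, 0 ≤ p i t ω) (hp_Tbar : ∀ᵐ ω ∂μ, ∑ t ∈ Icc 1 T, ∑ i, p i t ω ≤ Tbar)
    (ht : t ≤ T) : Integrable (threshold μ ℱ r p T Tbar t) μ := by
  refine (integrable_condExp (m := ℱ t) (f := futureReward r p T t)).mono
    ((stronglyMeasurable_threshold hp_meas ht).mono (ℱ.le t)).aestronglyMeasurable ?_
  filter_upwards [ae_one_le_remainingBudget hp0 hp_Tbar] with ω hω
  rw [threshold, norm_div]
  exact div_le_self (norm_nonneg _) ((hω t ht).trans (le_abs_self _))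

variable [IsFiniteMeasure μ]

theorem integrable_arrival (hp_meas : ∀ i, ∀ t ∈ Icc 1 T, Measurable[ℱ t] (p i t))
    (hp0 : ∀ i t ω, 0 ≤ p i t ω) (hp1 : ∀ i t ω, p i t ω ≤ 1) {i : Fin I} (ht : t ∈ Icc 1 T) :
    Integrable (p i t) μ :=
  .of_bound ((hp_meas i t ht).mono (ℱ.le t) le_rfl).aestronglyMeasurable 1 <|
    ae_of_all _ fun ω => abs_le.2 ⟨by linarith [hp0 i t ω], hp1 i t ω⟩

theorem integrable_futureReward (hp_meas : ∀ i, ∀ t ∈ Icc 1 T, Measurable[ℱ t] (p i t))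
    (hp0 : ∀ i t ω, 0 ≤ p i t ω) (hp1 : ∀ i t ω, p i t ω ≤ 1) :
    Integrable (futureReward r p T t) μ :=
  integrable_finsetSum _ fun _ ht' => integrable_finsetSum _ fun i _ =>
    (integrable_arrival hp_meas hp0 hp1 (Icc_subset_Icc (by omega) le_rfl ht')).const_mul (r i _)

theorem integrable_thresholdGain (hp_meas : ∀ i, ∀ t ∈ Icc 1 T, Measurable[ℱ t] (p i t))
    (hp0 : ∀ i t ω, 0 ≤ p i t ω) (hp1 : ∀ i t ω, p i t ω ≤ 1)
    (hp_Tbar : ∀ᵐ ω ∂μ, ∑ t ∈ Icc 1 T, ∑ i, p i t ω ≤ Tbar) (ht : t ∈ Icc 1 T) :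
    Integrable (thresholdGain μ ℱ r p T Tbar t) μ :=
  integrable_finsetSum _ fun i _ =>
    ((integrable_const (r i t)).sub (integrable_threshold hp_meas hp0 hp_Tbar (mem_Icc.1 ht).2)
      ).pos_part.bdd_mul (c := 1)
      (integrable_arrival hp_meas hp0 hp1 ht).aestronglyMeasurable
      (ae_of_all _ fun ω => abs_le.2 ⟨by linarith [hp0 i t ω], hp1 i t ω⟩)

theorem integrable_zProcess (hp_meas : ∀ i, ∀ t ∈ Icc 1 T, Measurable[ℱ t] (p i t))
    (hp0 : ∀ i t ω, 0 ≤ p i t ω) (hp1 : ∀ i t ω, p i t ω ≤ 1)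
    (hp_Tbar : ∀ᵐ ω ∂μ, ∑ t ∈ Icc 1 T, ∑ i, p i t ω ≤ Tbar) (ht : t ≤ T) :
    Integrable (zProcess μ ℱ r p T Tbar t) μ :=
  (integrable_threshold hp_meas hp0 hp_Tbar ht).add <| integrable_finsetSum _ fun _ ht' =>
    integrable_thresholdGain hp_meas hp0 hp1 hp_Tbar (Icc_subset_Icc le_rfl ht ht')

theorem threshold_le_condExp_succ (hp_meas : ∀ i, ∀ t ∈ Icc 1 T, Measurable[ℱ t] (p i t))
    (hp0 : ∀ i t ω, 0 ≤ p i t ω) (hp1 : ∀ i t ω, p i t ω ≤ 1)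
    (hp_Tbar : ∀ᵐ ω ∂μ, ∑ t ∈ Icc 1 T, ∑ i, p i t ω ≤ Tbar) (ht : t + 1 ≤ T) :
    threshold μ ℱ r p T Tbar t ≤ᵐ[μ]
      μ[threshold μ ℱ r p T Tbar (t + 1) + thresholdGain μ ℱ r p T Tbar (t + 1) | ℱ t] := by
  set W := threshold μ ℱ r p T Tbar (t + 1) + thresholdGain μ ℱ r p T Tbar (t + 1)
  set g : Ω → ℝ := fun ω => ∑ i, r i (t + 1) * p i (t + 1) ω
  have hmem : t + 1 ∈ Icc 1 T := mem_Icc.2 ⟨le_add_self, ht⟩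
  have hbudget := ae_one_le_remainingBudget hp0 hp_Tbar
  have hD := measurable_remainingBudget (Tbar := Tbar) hp_meas (Nat.le_of_succ_le ht)
  have hg : Integrable g μ := integrable_finsetSum _ fun i _ =>
    (integrable_arrival hp_meas hp0 hp1 hmem).const_mul (r i (t + 1))
  have hW : Integrable W μ := (integrable_threshold hp_meas hp0 hp_Tbar ht).add
    (integrable_thresholdGain hp_meas hp0 hp1 hp_Tbar hmem)
  have hDW : Integrable (remainingBudget Tbar p t * W) μ := by
    refine hW.bdd_mul (c := 1 + Tbar) (hD.mono (ℱ.le t) le_rfl).aestronglyMeasurable ?_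
    filter_upwards [hbudget] with ω hω
    rw [Real.norm_eq_abs, abs_of_pos (by linarith [hω t (by omega)])]
    exact remainingBudget_le hp0 ω
  have htower : μ[g + μ[futureReward r p T (t + 1) | ℱ (t + 1)] | ℱ t] =ᵐ[μ]
      μ[futureReward r p T t | ℱ t] := by
    rw [show futureReward r p T t = g + futureReward r p T (t + 1) from
      funext (futureReward_eq_add ht)]
    exact condExp_add_condExp_of_le (ℱ.mono t.le_succ) (ℱ.le _) hg
      (integrable_futureReward hp_meas hp0 hp1)
  have hpointwise : g + μ[futureReward r p T (t + 1) | ℱ (t + 1)] ≤ᵐ[μ]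
      remainingBudget Tbar p t * W := by
    filter_upwards [hbudget] with ω hω
    have hd : remainingBudget Tbar p (t + 1) ω ≠ 0 := by linarith [hω (t + 1) ht]
    have key := sum_mul_add_mul_le_mul_add_sum_mul_max univ (r · (t + 1)) (p · (t + 1) ω)
      (fun i _ => hp0 i (t + 1) ω) (x := threshold μ ℱ r p T Tbar (t + 1) ω)
      (by rw [← remainingBudget_eq_add]; exact hω t (by omega))
    rwa [threshold, mul_div_cancel₀ _ hd, ← remainingBudget_eq_add] at key
  filter_upwards [condExp_div_le_condExp hD.stronglyMeasurable
    (hbudget.mono fun ω hω => by linarith [hω t (by omega)]) (hg.add integrable_condExp) hW hDW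
    hpointwise, htower] with ω hle heq
  rwa [heq] at hle

theorem zProcess_le_condExp_succ (hp_meas : ∀ i, ∀ t ∈ Icc 1 T, Measurable[ℱ t] (p i t))
    (hp0 : ∀ i t ω, 0 ≤ p i t ω) (hp1 : ∀ i t ω, p i t ω ≤ 1)
    (hp_Tbar : ∀ᵐ ω ∂μ, ∑ t ∈ Icc 1 T, ∑ i, p i t ω ≤ Tbar) (ht : t < T) :
    zProcess μ ℱ r p T Tbar t ≤ᵐ[μ] μ[zProcess μ ℱ r p T Tbar (t + 1) | ℱ t] := by
  set Z := zProcess μ ℱ r p T Tbar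
  set h := threshold μ ℱ r p T Tbar
  have hsplit : Z (t + 1) = (Z t - h t) + (h (t + 1) + thresholdGain μ ℱ r p T Tbar (t + 1)) := by
    funext ω
    simp only [Z, h, zProcess, Pi.add_apply, Pi.sub_apply, sum_Icc_succ_top (by omega : 1 ≤ t + 1)]
    ring
  have hmeas : StronglyMeasurable[ℱ t] (Z t - h t) :=
    (stronglyMeasurable_zProcess hp_meas ht.le).sub (stronglyMeasurable_threshold hp_meas ht.le)
  have hint : Integrable (Z t - h t) μ :=
    (integrable_zProcess hp_meas hp0 hp1 hp_Tbar ht.le).sub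
      (integrable_threshold hp_meas hp0 hp_Tbar ht.le)
  have hW : Integrable (h (t + 1) + thresholdGain μ ℱ r p T Tbar (t + 1)) μ :=
    (integrable_threshold hp_meas hp0 hp_Tbar ht).add
      (integrable_thresholdGain hp_meas hp0 hp1 hp_Tbar (mem_Icc.2 ⟨le_add_self, ht⟩))
  rw [hsplit]
  filter_upwards [condExp_add hint hW (ℱ t), threshold_le_condExp_succ hp_meas hp0 hp1 hp_Tbar ht]
    with ω hadd hle
  rw [hadd, Pi.add_apply, condExp_of_stronglyMeasurable (ℱ.le t) hmeas hint, Pi.sub_apply]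
  linarith

theorem submartingale_zProcess_comp_min (hp_meas : ∀ i, ∀ t ∈ Icc 1 T, Measurable[ℱ t] (p i t))
    (hp0 : ∀ i t ω, 0 ≤ p i t ω) (hp1 : ∀ i t ω, p i t ω ≤ 1)
    (hp_Tbar : ∀ᵐ ω ∂μ, ∑ t ∈ Icc 1 T, ∑ i, p i t ω ≤ Tbar) :
    Submartingale (fun t => zProcess μ ℱ r p T Tbar (min t T)) ℱ μ :=
  submartingale_comp_min_of_le_condExp_succ (fun _ ht => stronglyMeasurable_zProcess hp_meas ht)
    (fun _ ht => integrable_zProcess hp_meas hp0 hp1 hp_Tbar ht)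
    fun _ ht => zProcess_le_condExp_succ hp_meas hp0 hp1 hp_Tbar ht

end

theorem Z_is_submartingale_general
    {Ω : Type*} [MeasurableSpace Ω] (μ : Measure Ω) [IsProbabilityMeasure μ]
    (T I : ℕ)
    (r : Fin I → ℕ → ℝ)
    (ℱ : Filtration ℕ (inferInstance : MeasurableSpace Ω))
    (p : Fin I → ℕ → Ω → ℝ)
    (hp_meas : ∀ i, ∀ t ∈ Finset.Icc 1 T, Measurable[ℱ t] (p i t))
    (hp01 : ∀ i t ω, 0 ≤ p i t ω ∧ p i t ω ≤ 1)
    (Tbar : ℝ)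
    (hp_Tbar : ∀ᵐ ω ∂μ, ∑ t ∈ Finset.Icc 1 T, ∑ i, p i t ω ≤ Tbar)
    -- the threshold process:
    (h : ℕ → Ω → ℝ)
    (hh : ∀ t ≤ T, ∀ ω, h t ω =
      (μ[(fun ω' => ∑ t' ∈ Finset.Icc (t + 1) T, ∑ i, r i t' * p i t' ω') | ℱ t]) ω
        / (1 + Tbar - ∑ t' ∈ Finset.Icc 1 t, ∑ i, p i t' ω))
    -- the process `Z`:
    (Z : ℕ → Ω → ℝ)
    (hZ : ∀ t ≤ T, ∀ ω, Z t ω =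
      h t ω + ∑ t' ∈ Finset.Icc 1 t, ∑ i, p i t' ω * max (r i t' - h t' ω) 0) :
    (∀ t ≤ T, StronglyMeasurable[ℱ t] (Z t)) ∧
    (∀ t ≤ T, Integrable (Z t) μ) ∧
    (∀ s t, s ≤ t → t ≤ T → Z s ≤ᵐ[μ] μ[Z t | ℱ s]) := by
  have hh' : ∀ t ≤ T, h t = threshold μ ℱ r p T Tbar t := fun t ht => funext (hh t ht)
  have hZ' : ∀ t ≤ T, Z t = zProcess μ ℱ r p T Tbar t := by
    intro t ht
    funext ω
    rw [hZ t ht ω, hh' t ht, zProcess]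
    refine congrArg _ (sum_congr rfl fun t' ht' => ?_)
    rw [hh' t' ((mem_Icc.1 ht').2.trans ht), thresholdGain]
  have hsub := submartingale_zProcess_comp_min hp_meas (fun i t ω => (hp01 i t ω).1)
    (fun i t ω => (hp01 i t ω).2) hp_Tbar (r := r)
  refine ⟨fun t ht => ?_, fun t ht => ?_, fun s t hst ht => ?_⟩
  · simpa only [hZ' t ht, min_eq_left ht] using hsub.stronglyMeasurable t
  · simpa only [hZ' t ht, min_eq_left ht] using hsub.integrable t
  · simpa only [hZ' t ht, hZ' s (hst.trans ht), min_eq_left ht, min_eq_left (hst.trans ht)]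
      using hsub.ae_le_condExp hst

/-- **The process `Z` is a submartingale.** In the single-resource prophet model with
correlated arrivals, the process `Z_t = h_t + Σ_{t'=1}^{t} Σ_{i=1}^I p_{it'} (r_{it'} - h_{t'})⁺`,
`t = 0, …, T`, is a submartingale with respect to the filtration `(ℱ_t)_{t=0,…,T}`:
it is adapted, integrable, and `Z_s ≤ E[Z_t | ℱ_s]` a.s. for all `0 ≤ s ≤ t ≤ T`. -/
theorem Z_is_submartingale
    {Ω : Type*} [MeasurableSpace Ω] (μ : Measure Ω) [IsProbabilityMeasure μ]
    (T I : ℕ) (hT : 1 ≤ T) (hI : 1 ≤ I)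
    (r : Fin I → ℕ → ℝ) (hr : ∀ i t, 0 ≤ r i t)
    (ℱ : Filtration ℕ (inferInstance : MeasurableSpace Ω))
    (p : Fin I → ℕ → Ω → ℝ)
    (hp_meas : ∀ i, ∀ t ∈ Finset.Icc 1 T, Measurable[ℱ t] (p i t))
    (hp01 : ∀ i t ω, 0 ≤ p i t ω ∧ p i t ω ≤ 1)
    (hp_sum : ∀ᵐ ω ∂μ, ∀ t ∈ Finset.Icc 1 T, ∑ i, p i t ω ≤ 1)
    (Tbar : ℝ) (hTbar : 0 < Tbar)
    (hp_Tbar : ∀ᵐ ω ∂μ, ∑ t ∈ Finset.Icc 1 T, ∑ i, p i t ω ≤ Tbar)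
    -- the threshold process:
    (h : ℕ → Ω → ℝ)
    (hh : ∀ t ≤ T, ∀ ω, h t ω =
      (μ[(fun ω' => ∑ t' ∈ Finset.Icc (t + 1) T, ∑ i, r i t' * p i t' ω') | ℱ t]) ω
        / (1 + Tbar - ∑ t' ∈ Finset.Icc 1 t, ∑ i, p i t' ω))
    -- the process `Z`:
    (Z : ℕ → Ω → ℝ)
    (hZ : ∀ t ≤ T, ∀ ω, Z t ω =
      h t ω + ∑ t' ∈ Finset.Icc 1 t, ∑ i, p i t' ω * max (r i t' - h t' ω) 0) :
    (∀ t ≤ T, StronglyMeasurable[ℱ t] (Z t)) ∧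
    (∀ t ≤ T, Integrable (Z t) μ) ∧
    (∀ s t, s ≤ t → t ≤ T → Z s ≤ᵐ[μ] μ[Z t | ℱ s]) :=
  Z_is_submartingale_general μ T I r ℱ p hp_meas hp01 Tbar hp_Tbar h hh Z hZ
end

section
/- In the single-resource prophet model with correlated arrivals, the expected reward of the threshold policy equals the expected value of the process Z stopped at the sale time: E[V^STP] = E[Z_τ], where Z_t = h_t + Σ_{t'=1}^{t} Σ_{i=1}^I p_{it'} (r_{it'} − h_{t'})^+ for t = 0,1,…,T+1 (using h_{T+1} = 0 and p_{i,T+1} = 0). -/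
open MeasureTheory ProbabilityTheory

private lemma noSale' {I : ℕ} (x b : Fin I → ℝ)
    (hx : ∀ i, x i = 0 ∨ x i = 1) (hb : ∀ i, b i = 0 ∨ b i = 1)
    (hsum : ∑ i, x i ≤ 1) (hne : (∑ i, x i * b i) ≠ 1) (i : Fin I) :
    x i * b i = 0 := by
  by_contra hc
  have hxi : x i = 1 := (hx i).resolve_left (fun h0 => hc (by simp [h0]))
  have hbi : b i = 1 := (hb i).resolve_left (fun h0 => hc (by simp [h0]))
  have hnn : ∀ j, 0 ≤ x j * b j := fun j =>
    mul_nonneg (by rcases hx j with h | h <;> simp [h]) (by rcases hb j with h | h <;> simp [h])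
  have h1 : (1 : ℝ) ≤ ∑ j, x j * b j := by
    have := Finset.single_le_sum (f := fun j => x j * b j) (fun j _ => hnn j) (Finset.mem_univ i)
    simpa [hxi, hbi] using this
  have h2 : (∑ j, x j * b j) ≤ ∑ j, x j := by
    apply Finset.sum_le_sum; intro j _
    rcases hb j with h | h <;> rcases hx j with h' | h' <;> simp [h, h']
  exact hne (le_antisymm (h2.trans hsum) h1)

private lemma sale' {I : ℕ} (x b : Fin I → ℝ)
    (hx : ∀ i, x i = 0 ∨ x i = 1) (hb : ∀ i, b i = 0 ∨ b i = 1)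
    (hsum : ∑ i, x i ≤ 1) (heq : (∑ i, x i * b i) = 1) :
    ∃ i₀, x i₀ = 1 ∧ b i₀ = 1 ∧ ∀ j, j ≠ i₀ → x j = 0 := by
  obtain ⟨i₀, _, hi₀⟩ := Finset.exists_ne_zero_of_sum_ne_zero
    (by rw [heq]; norm_num : (∑ i, x i * b i) ≠ 0)
  have hx0 : x i₀ = 1 := (hx i₀).resolve_left fun h => hi₀ (by simp [h])
  have hb0 : b i₀ = 1 := (hb i₀).resolve_left fun h => hi₀ (by simp [h])
  refine ⟨i₀, hx0, hb0, ?_⟩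
  intro j hj
  have hnnx : ∀ k, 0 ≤ x k := fun k => by rcases hx k with h | h <;> simp [h]
  have hsum' : x i₀ + ∑ k ∈ Finset.univ.erase i₀, x k = ∑ k, x k :=
    Finset.add_sum_erase _ _ (Finset.mem_univ i₀)
  have hxj : x j ≤ ∑ k ∈ Finset.univ.erase i₀, x k :=
    Finset.single_le_sum (fun k _ => hnnx k) (Finset.mem_erase.mpr ⟨hj, Finset.mem_univ j⟩)
  have : x j ≤ 0 := by linarith
  exact le_antisymm this (hnnx j)

/-- **Reward identity for the threshold policy.** In the single-resource prophet model
with correlated arrivals, the expected reward of the simulation-based threshold policy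
equals the expected value of the process `Z` stopped at the sale time: `E[V^STP] = E[Z_τ]`,
where `Z_t = h_t + Σ_{t'=1}^{t} Σ_{i=1}^I p_{it'} (r_{it'} - h_{t'})⁺` for `t = 0, …, T+1`
(with `h_{T+1} = 0` and `p_{i,T+1} = 0`). -/
theorem expected_STP_reward_eq_expected_stopped_Z
    {Ω : Type*} [MeasurableSpace Ω] (μ : Measure Ω) [IsProbabilityMeasure μ]
    (T I : ℕ) (hT : 1 ≤ T) (hI : 1 ≤ I)
    (r : Fin I → ℕ → ℝ) (hr : ∀ i t, 0 ≤ r i t)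
    (ℱ : Filtration ℕ (inferInstance : MeasurableSpace Ω))
    (p : Fin I → ℕ → Ω → ℝ)
    (hp_meas : ∀ i, ∀ t ∈ Finset.Icc 1 T, Measurable[ℱ t] (p i t))
    (hp01 : ∀ i t ω, 0 ≤ p i t ω ∧ p i t ω ≤ 1)
    (hp_sum : ∀ᵐ ω ∂μ, ∀ t ∈ Finset.Icc 1 T, ∑ i, p i t ω ≤ 1)
    (hp_top : ∀ i ω, p i (T + 1) ω = 0)
    (Tbar : ℝ) (hTbar : 0 < Tbar)
    (hp_Tbar : ∀ᵐ ω ∂μ, ∑ t ∈ Finset.Icc 1 T, ∑ i, p i t ω ≤ Tbar)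
    -- the arrival indicators:
    (X : Fin I → ℕ → Ω → ℝ)
    (hX_meas : ∀ i t, Measurable (X i t))
    (hX01 : ∀ i t ω, X i t ω = 0 ∨ X i t ω = 1)
    (hX_sum : ∀ᵐ ω ∂μ, ∀ t ∈ Finset.Icc 1 T, ∑ i, X i t ω ≤ 1)
    (hX_cond : ∀ i, ∀ t ∈ Finset.Icc 1 T,
      μ[X i t | ℱ t ⊔ (⨆ i' : Fin I, ⨆ t' ∈ Finset.Iio t,
        MeasurableSpace.comap (X i' t') inferInstance)] =ᵐ[μ] p i t)
    -- the threshold process, with `h (T+1) = 0`: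
    (h : ℕ → Ω → ℝ)
    (hh : ∀ t ≤ T, ∀ ω, h t ω =
      (μ[(fun ω' => ∑ t' ∈ Finset.Icc (t + 1) T, ∑ i, r i t' * p i t' ω') | ℱ t]) ω
        / (1 + Tbar - ∑ t' ∈ Finset.Icc 1 t, ∑ i, p i t' ω))
    (hh_top : ∀ ω, h (T + 1) ω = 0)
    -- the process `Z` for `t = 0, …, T+1`:
    (Z : ℕ → Ω → ℝ)
    (hZ : ∀ t ≤ T + 1, ∀ ω, Z t ω =
      h t ω + ∑ t' ∈ Finset.Icc 1 t, ∑ i, p i t' ω * max (r i t' - h t' ω) 0)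
    -- the sale time `τ`: the first period in `1, …, T` in which a customer arrives whose
    -- reward meets the threshold, and `T+1` if there is no such period:
    (τ : Ω → ℕ)
    (hτ : ∀ ω,
      (τ ω ∈ Finset.Icc 1 T ∧
        (∑ i, X i (τ ω) ω * (if h (τ ω) ω ≤ r i (τ ω) then 1 else 0)) = 1 ∧
        ∀ t ∈ Finset.Icc 1 T, t < τ ω →
          (∑ i, X i t ω * (if h t ω ≤ r i t then 1 else 0)) ≠ 1) ∨
      (τ ω = T + 1 ∧
        ∀ t ∈ Finset.Icc 1 T, (∑ i, X i t ω * (if h t ω ≤ r i t then 1 else 0)) ≠ 1))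
    -- the reward of the threshold policy:
    (VSTP : Ω → ℝ)
    (hVSTP : ∀ ω, VSTP ω =
      ∑ t ∈ Finset.Icc 1 T, ∑ i, X i t ω * r i t * (if τ ω = t then 1 else 0)) :
    ∫ ω, VSTP ω ∂μ = ∫ ω, Z (τ ω) ω ∂μ := by
  classical
  -- the "success indicator sum" process
  set S : ℕ → Ω → ℝ := fun t ω => ∑ i, X i t ω * (if h t ω ≤ r i t then 1 else 0) with hSdef
  have hτ' : ∀ ω,
      (τ ω ∈ Finset.Icc 1 T ∧ S (τ ω) ω = 1 ∧
        ∀ t ∈ Finset.Icc 1 T, t < τ ω → S t ω ≠ 1) ∨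
      (τ ω = T + 1 ∧ ∀ t ∈ Finset.Icc 1 T, S t ω ≠ 1) := hτ
  clear hτ
  -- the global reward bound
  set R : ℝ := ∑ t ∈ Finset.Icc 1 T, ∑ i, r i t with hRdef
  have hR0 : 0 ≤ R := Finset.sum_nonneg fun t _ => Finset.sum_nonneg fun i _ => hr i t
  -- τ takes values in [1, T+1]
  have hτ_mem : ∀ ω, 1 ≤ τ ω ∧ τ ω ≤ T + 1 := by
    intro ω
    rcases hτ' ω with ⟨hmem, -, -⟩ | ⟨heq, -⟩
    · obtain ⟨h1, h2⟩ := Finset.mem_Icc.mp hmem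
      exact ⟨h1, h2.trans (Nat.le_succ T)⟩
    · omega
  -- measurability of the threshold w.r.t. ℱ t
  have hp_meas' : ∀ i, ∀ t ∈ Finset.Icc 1 T, Measurable (p i t) :=
    fun i t ht => (hp_meas i t ht).mono (ℱ.le t) le_rfl
  have hden_meas : ∀ t ∈ Finset.Icc 1 T,
      Measurable[ℱ t] (fun ω => 1 + Tbar - ∑ t' ∈ Finset.Icc 1 t, ∑ i, p i t' ω) := by
    intro t ht
    apply Measurable.const_sub
    apply Finset.measurable_sum
    intro t' ht'
    apply Finset.measurable_sum
    intro i _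
    obtain ⟨h1, h2⟩ := Finset.mem_Icc.mp ht'
    have ht'T : t' ∈ Finset.Icc 1 T :=
      Finset.mem_Icc.mpr ⟨h1, h2.trans (Finset.mem_Icc.mp ht).2⟩
    exact (hp_meas i t' ht'T).mono (ℱ.mono h2) le_rfl
  have hh_measF : ∀ t ∈ Finset.Icc 1 T, Measurable[ℱ t] (h t) := by
    intro t ht
    have h1 : Measurable[ℱ t]
        (μ[(fun ω' => ∑ t' ∈ Finset.Icc (t + 1) T, ∑ i, r i t' * p i t' ω') | ℱ t]) :=
      stronglyMeasurable_condExp.measurable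
    have : h t = fun ω =>
        (μ[(fun ω' => ∑ t' ∈ Finset.Icc (t + 1) T, ∑ i, r i t' * p i t' ω') | ℱ t]) ω
          / (1 + Tbar - ∑ t' ∈ Finset.Icc 1 t, ∑ i, p i t' ω) :=
      funext (hh t (Finset.mem_Icc.mp ht).2)
    rw [this]
    exact h1.div (hden_meas t ht)
  have hh_meas : ∀ t ∈ Finset.Icc 1 T, Measurable (h t) :=
    fun t ht => (hh_measF t ht).mono (ℱ.le t) le_rfl
  -- a.e. bounds on the threshold
  have hh_ae : ∀ t ∈ Finset.Icc 1 T, ∀ᵐ ω ∂μ, 0 ≤ h t ω ∧ h t ω ≤ R := by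
    intro t ht
    obtain ⟨ht1, htT⟩ := Finset.mem_Icc.mp ht
    set f : Ω → ℝ := fun ω' => ∑ t' ∈ Finset.Icc (t + 1) T, ∑ i, r i t' * p i t' ω' with hfdef
    have hf_nonneg : ∀ ω, 0 ≤ f ω := fun ω =>
      Finset.sum_nonneg fun t' _ => Finset.sum_nonneg fun i _ =>
        mul_nonneg (hr i t') (hp01 i t' ω).1
    have hf_le : ∀ ω, f ω ≤ R := by
      intro ω
      rw [hRdef]
      have hsub : Finset.Icc (t + 1) T ⊆ Finset.Icc 1 T := by
        apply Finset.Icc_subset_Icc_left; omega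
      calc f ω ≤ ∑ t' ∈ Finset.Icc (t + 1) T, ∑ i, r i t' := by
            apply Finset.sum_le_sum; intro t' _
            apply Finset.sum_le_sum; intro i _
            calc r i t' * p i t' ω ≤ r i t' * 1 :=
                  mul_le_mul_of_nonneg_left (hp01 i t' ω).2 (hr i t')
              _ = r i t' := mul_one _
        _ ≤ ∑ t' ∈ Finset.Icc 1 T, ∑ i, r i t' :=
            Finset.sum_le_sum_of_subset_of_nonneg hsub
              (fun t' _ _ => Finset.sum_nonneg fun i _ => hr i t')
    have hf_meas : Measurable f := by
      apply Finset.measurable_sum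
      intro t' ht'
      apply Finset.measurable_sum
      intro i _
      obtain ⟨h1, h2⟩ := Finset.mem_Icc.mp ht'
      exact (hp_meas' i t' (Finset.mem_Icc.mpr ⟨by omega, h2⟩)).const_mul _
    have hf_int : Integrable f μ :=
      ⟨hf_meas.aestronglyMeasurable, HasFiniteIntegral.of_bounded (C := R)
        (Filter.Eventually.of_forall fun ω => by
          rw [Real.norm_eq_abs, abs_le]
          exact ⟨by linarith [hf_nonneg ω], hf_le ω⟩)⟩
    have hnum_nonneg : 0 ≤ᵐ[μ] μ[f | ℱ t] :=
      condExp_nonneg (Filter.Eventually.of_forall hf_nonneg)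
    have hnum_le : μ[f | ℱ t] ≤ᵐ[μ] fun _ => R := by
      have := condExp_mono (m := ℱ t) hf_int (integrable_const R)
        (Filter.Eventually.of_forall hf_le)
      rwa [condExp_const (ℱ.le t)] at this
    have hden_ae : ∀ᵐ ω ∂μ, (1 : ℝ) ≤ 1 + Tbar - ∑ t' ∈ Finset.Icc 1 t, ∑ i, p i t' ω := by
      filter_upwards [hp_Tbar] with ω hω
      have hsub : Finset.Icc 1 t ⊆ Finset.Icc 1 T := Finset.Icc_subset_Icc_right htT
      have : ∑ t' ∈ Finset.Icc 1 t, ∑ i, p i t' ω ≤ ∑ t' ∈ Finset.Icc 1 T, ∑ i, p i t' ω :=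
        Finset.sum_le_sum_of_subset_of_nonneg hsub
          (fun t' _ _ => Finset.sum_nonneg fun i _ => (hp01 i t' ω).1)
      linarith
    filter_upwards [hnum_nonneg, hnum_le, hden_ae] with ω h1 h2 h3
    rw [hh t htT ω]
    constructor
    · exact div_nonneg h1 (by linarith)
    · calc (μ[f | ℱ t]) ω / (1 + Tbar - ∑ t' ∈ Finset.Icc 1 t, ∑ i, p i t' ω)
          ≤ (μ[f | ℱ t]) ω := div_le_self h1 h3
      _ ≤ R := h2
  -- measurability of S
  have hS_meas : ∀ t ∈ Finset.Icc 1 T, Measurable (S t) := by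
    intro t ht
    apply Finset.measurable_sum
    intro i _
    exact (hX_meas i t).mul
      (Measurable.ite (measurableSet_le (hh_meas t ht) measurable_const)
        measurable_const measurable_const)
  -- characterization of `t ≤ τ ω`
  have hle_iff : ∀ t ∈ Finset.Icc 1 T, ∀ ω,
      (t ≤ τ ω ↔ ∀ t' ∈ Finset.Icc 1 T, t' < t → S t' ω ≠ 1) := by
    intro t ht ω
    constructor
    · intro hle t' ht' hlt
      rcases hτ' ω with ⟨hmem, hS1, hprev⟩ | ⟨heq, hall⟩
      · exact hprev t' ht' (lt_of_lt_of_le hlt hle)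
      · exact hall t' ht'
    · intro hall
      rcases hτ' ω with ⟨hmem, hS1, hprev⟩ | ⟨heq, -⟩
      · by_contra hc
        exact hall (τ ω) hmem (Nat.lt_of_not_le hc) hS1
      · rw [heq]
        obtain ⟨-, h2⟩ := Finset.mem_Icc.mp ht
        omega
  -- characterization of `τ ω = t`
  have heq_iff : ∀ t ∈ Finset.Icc 1 T, ∀ ω,
      (τ ω = t ↔ (S t ω = 1 ∧ ∀ t' ∈ Finset.Icc 1 T, t' < t → S t' ω ≠ 1)) := by
    intro t ht ω
    constructor
    · intro heq
      rcases hτ' ω with ⟨hmem, hS1, hprev⟩ | ⟨heq2, hall⟩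
      · subst heq
        exact ⟨hS1, fun t' ht' hlt => hprev t' ht' hlt⟩
      · obtain ⟨-, h2⟩ := Finset.mem_Icc.mp ht; omega
    · rintro ⟨hS1, hall⟩
      rcases hτ' ω with ⟨hmem, hS1', hprev⟩ | ⟨heq2, hall2⟩
      · by_contra hne
        rcases Nat.lt_or_ge (τ ω) t with hlt | hge
        · exact hall (τ ω) hmem hlt hS1'
        · exact hprev t ht (by omega) hS1
      · exact absurd hS1 (hall2 t ht)
  -- measurability of τ
  have hSone_meas : ∀ t ∈ Finset.Icc 1 T, MeasurableSet {ω | S t ω = 1} :=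
    fun t ht => (hS_meas t ht) (measurableSet_singleton 1)
  have hno_meas : ∀ u : ℕ,
      MeasurableSet {ω | ∀ t' ∈ Finset.Icc 1 T, t' < u → S t' ω ≠ 1} := by
    intro u
    have : {ω | ∀ t' ∈ Finset.Icc 1 T, t' < u → S t' ω ≠ 1}
        = ⋂ t' ∈ Finset.Icc 1 T, ⋂ (_ : t' < u), {ω | S t' ω = 1}ᶜ := by
      ext ω; simp [Set.mem_iInter]
    rw [this]
    exact Finset.measurableSet_biInter _ fun t' ht' =>
      MeasurableSet.iInter fun _ => (hSone_meas t' ht').compl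
  have hτ_meas : Measurable τ := by
    apply measurable_to_countable'
    intro t
    by_cases htI : t ∈ Finset.Icc 1 T
    · have : τ ⁻¹' {t} = {ω | S t ω = 1} ∩ {ω | ∀ t' ∈ Finset.Icc 1 T, t' < t → S t' ω ≠ 1} := by
        ext ω
        simp only [Set.mem_preimage, Set.mem_singleton_iff, Set.mem_inter_iff, Set.mem_setOf_eq]
        exact heq_iff t htI ω
      rw [this]
      exact (hSone_meas t htI).inter (hno_meas t)
    · by_cases htT1 : t = T + 1
      · subst htT1
        have : τ ⁻¹' {T + 1} = {ω | ∀ t' ∈ Finset.Icc 1 T, t' < T + 1 → S t' ω ≠ 1} := by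
          ext ω
          simp only [Set.mem_preimage, Set.mem_singleton_iff, Set.mem_setOf_eq]
          constructor
          · intro heq t' ht' _
            rcases hτ' ω with ⟨hmem, -, -⟩ | ⟨-, hall⟩
            · obtain ⟨-, h2⟩ := Finset.mem_Icc.mp hmem; omega
            · exact hall t' ht'
          · intro hall
            rcases hτ' ω with ⟨hmem, hS1, -⟩ | ⟨heq, -⟩
            · exact absurd hS1 (hall (τ ω) hmem
                (by obtain ⟨-, h2⟩ := Finset.mem_Icc.mp hmem; omega))
            · exact heq
        rw [this]
        exact hno_meas (T + 1)
      · have : τ ⁻¹' {t} = ∅ := by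
          ext ω
          simp only [Set.mem_preimage, Set.mem_singleton_iff, Set.mem_empty_iff_false,
            iff_false]
          intro heq
          rcases hτ' ω with ⟨hmem, -, -⟩ | ⟨heq2, -⟩
          · exact htI (heq ▸ hmem)
          · exact htT1 (heq ▸ heq2)
        rw [this]
        exact MeasurableSet.empty
  -- VSTP is integrable
  have hV_int : Integrable VSTP μ := by
    have hmeas : Measurable VSTP := by
      have : VSTP = fun ω => ∑ t ∈ Finset.Icc 1 T, ∑ i, X i t ω * r i t *
          (if τ ω = t then 1 else 0) := funext hVSTP
      rw [this]
      apply Finset.measurable_sum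
      intro t _
      apply Finset.measurable_sum
      intro i _
      exact ((hX_meas i t).mul_const _).mul
        (Measurable.ite (hτ_meas (measurableSet_singleton t)) measurable_const measurable_const)
    have hbound : ∀ ω, ‖VSTP ω‖ ≤ R := by
      intro ω
      have h0 : 0 ≤ VSTP ω := by
        rw [hVSTP]
        apply Finset.sum_nonneg; intro t _
        apply Finset.sum_nonneg; intro i _
        rcases hX01 i t ω with hx | hx <;> split <;> simp [hx, hr i t]
      have h1 : VSTP ω ≤ R := by
        rw [hVSTP, hRdef]
        apply Finset.sum_le_sum; intro t _
        apply Finset.sum_le_sum; intro i _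
        rcases hX01 i t ω with hx | hx <;> split <;> simp [hx, hr i t]
      rw [Real.norm_eq_abs, abs_le]
      exact ⟨by linarith, h1⟩
    exact ⟨hmeas.aestronglyMeasurable,
      HasFiniteIntegral.of_bounded (Filter.Eventually.of_forall hbound)⟩
  -- the compensator process
  set D : ℕ → Ω → ℝ := fun t ω =>
    ∑ i, ((if t ≤ τ ω then (1 : ℝ) else 0) * max (r i t - h t ω) 0) * (X i t ω - p i t ω)
    with hDdef
  -- the pointwise a.e. identity
  have hae : ∀ᵐ ω ∂μ, Z (τ ω) ω = VSTP ω - ∑ t ∈ Finset.Icc 1 T, D t ω := by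
    filter_upwards [hX_sum] with ω hXs
    have hb01 : ∀ t : ℕ, ∀ i, (if h t ω ≤ r i t then (1 : ℝ) else 0) = 0 ∨
        (if h t ω ≤ r i t then (1 : ℝ) else 0) = 1 := fun t i => by split <;> simp
    have key0 : ∀ t ∈ Finset.Icc 1 T, S t ω ≠ 1 →
        ∀ i, X i t ω * max (r i t - h t ω) 0 = 0 := by
      intro t ht hne i
      have h0 : X i t ω * (if h t ω ≤ r i t then (1 : ℝ) else 0) = 0 :=
        noSale' (fun i => X i t ω) (fun i => if h t ω ≤ r i t then 1 else 0)
          (fun i => hX01 i t ω) (fun i => hb01 t i) (hXs t ht) hne i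
      rcases hX01 i t ω with hx | hx
      · rw [hx, zero_mul]
      · rw [hx, one_mul] at h0 ⊢
        have hnle : ¬ h t ω ≤ r i t := by
          intro hle; rw [if_pos hle] at h0; exact one_ne_zero h0
        exact max_eq_right (sub_nonpos.mpr (le_of_lt (lt_of_not_ge hnle)))
    have hD_eval_le : ∀ t, t ≤ τ ω →
        D t ω = ∑ i, max (r i t - h t ω) 0 * (X i t ω - p i t ω) := by
      intro t hle
      simp only [hDdef, if_pos hle, one_mul]
    have hD_eval_gt : ∀ t, ¬ (t ≤ τ ω) → D t ω = 0 := by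
      intro t hgt
      simp only [hDdef, if_neg hgt, zero_mul]
      exact Finset.sum_eq_zero fun i _ => by ring
    rcases hτ' ω with ⟨hmem, hS1, hprev⟩ | ⟨heq, hall⟩
    -- case 1 : a sale happens at time τ ω ≤ T
    · obtain ⟨hs1, hsT⟩ := Finset.mem_Icc.mp hmem
      obtain ⟨i₀, hXi₀, hbi₀, hrest⟩ :=
        sale' (fun i => X i (τ ω) ω) (fun i => if h (τ ω) ω ≤ r i (τ ω) then 1 else 0)
          (fun i => hX01 i (τ ω) ω) (fun i => hb01 (τ ω) i) (hXs (τ ω) hmem) hS1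
      have hXi₀' : X i₀ (τ ω) ω = 1 := hXi₀
      have hrest' : ∀ j, j ≠ i₀ → X j (τ ω) ω = 0 := hrest
      have hhi₀ : h (τ ω) ω ≤ r i₀ (τ ω) := by
        by_contra hc
        simp only [if_neg hc] at hbi₀
        exact zero_ne_one hbi₀
      have hV : VSTP ω = r i₀ (τ ω) := by
        rw [hVSTP]
        rw [Finset.sum_eq_single_of_mem (τ ω) hmem
          (fun t _ hne => Finset.sum_eq_zero fun i _ => by simp [Ne.symm hne])]
        rw [Finset.sum_eq_single_of_mem i₀ (Finset.mem_univ i₀)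
          (fun j _ hj => by simp [hrest' j hj])]
        simp [hXi₀']
      have hZτ : Z (τ ω) ω = h (τ ω) ω +
          ∑ t' ∈ Finset.Icc 1 (τ ω), ∑ i, p i t' ω * max (r i t' - h t' ω) 0 :=
        hZ (τ ω) (by omega) ω
      have hDsum : ∑ t ∈ Finset.Icc 1 T, D t ω = ∑ t ∈ Finset.Icc 1 (τ ω), D t ω := by
        symm
        apply Finset.sum_subset (Finset.Icc_subset_Icc_right hsT)
        intro t htT hts
        apply hD_eval_gt
        intro hle
        exact hts (Finset.mem_Icc.mpr ⟨(Finset.mem_Icc.mp htT).1, hle⟩)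
      have hDsum2 : ∑ t ∈ Finset.Icc 1 (τ ω), D t ω
          = ∑ t ∈ Finset.Icc 1 (τ ω), ∑ i, max (r i t - h t ω) 0 * (X i t ω - p i t ω) :=
        Finset.sum_congr rfl fun t htm => hD_eval_le t (Finset.mem_Icc.mp htm).2
      have hlast : ∑ t ∈ Finset.Icc 1 (τ ω), ∑ i, X i t ω * max (r i t - h t ω) 0
          = r i₀ (τ ω) - h (τ ω) ω := by
        rw [Finset.sum_eq_single_of_mem (τ ω) (Finset.mem_Icc.mpr ⟨hs1, le_rfl⟩) ?_]
        · rw [Finset.sum_eq_single_of_mem i₀ (Finset.mem_univ _)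
            (fun j _ hj => by rw [hrest' j hj, zero_mul])]
          rw [hXi₀', one_mul, max_eq_left (by linarith)]
        · intro t htmem hne
          have hlt : t < τ ω := lt_of_le_of_ne (Finset.mem_Icc.mp htmem).2 hne
          have htT : t ∈ Finset.Icc 1 T :=
            Finset.mem_Icc.mpr ⟨(Finset.mem_Icc.mp htmem).1, by omega⟩
          exact Finset.sum_eq_zero fun i _ => key0 t htT (hprev t htT hlt) i
      have hcomb : (∑ t ∈ Finset.Icc 1 (τ ω), ∑ i, p i t ω * max (r i t - h t ω) 0)
          + (∑ t ∈ Finset.Icc 1 (τ ω), ∑ i, max (r i t - h t ω) 0 * (X i t ω - p i t ω))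
          = ∑ t ∈ Finset.Icc 1 (τ ω), ∑ i, X i t ω * max (r i t - h t ω) 0 := by
        rw [← Finset.sum_add_distrib]
        apply Finset.sum_congr rfl
        intro t _
        rw [← Finset.sum_add_distrib]
        apply Finset.sum_congr rfl
        intro i _
        ring
      rw [hZτ, hV, hDsum, hDsum2]
      linarith
    -- case 2 : no sale ever happens, τ ω = T + 1
    · have hV0 : VSTP ω = 0 := by
        rw [hVSTP]
        apply Finset.sum_eq_zero
        intro t htI
        apply Finset.sum_eq_zero
        intro i _
        have hne : τ ω ≠ t := by obtain ⟨-, h2⟩ := Finset.mem_Icc.mp htI; omega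
        simp [hne]
      have hZT : Z (T + 1) ω = ∑ t ∈ Finset.Icc 1 T, ∑ i, p i t ω * max (r i t - h t ω) 0 := by
        rw [hZ (T + 1) le_rfl ω, hh_top ω, zero_add,
          Finset.sum_Icc_succ_top (by omega : 1 ≤ T + 1)]
        simp [hp_top]
      have hDsum : ∑ t ∈ Finset.Icc 1 T, D t ω
          = ∑ t ∈ Finset.Icc 1 T, ∑ i, max (r i t - h t ω) 0 * (X i t ω - p i t ω) :=
        Finset.sum_congr rfl fun t htI =>
          hD_eval_le t (by rw [heq]; exact Nat.le_succ_of_le (Finset.mem_Icc.mp htI).2)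
      have hzero : ∑ t ∈ Finset.Icc 1 T, ∑ i, X i t ω * max (r i t - h t ω) 0 = 0 :=
        Finset.sum_eq_zero fun t htI =>
          Finset.sum_eq_zero fun i _ => key0 t htI (hall t htI) i
      have hcomb : (∑ t ∈ Finset.Icc 1 T, ∑ i, p i t ω * max (r i t - h t ω) 0)
          + (∑ t ∈ Finset.Icc 1 T, ∑ i, max (r i t - h t ω) 0 * (X i t ω - p i t ω))
          = ∑ t ∈ Finset.Icc 1 T, ∑ i, X i t ω * max (r i t - h t ω) 0 := by
        rw [← Finset.sum_add_distrib]
        apply Finset.sum_congr rfl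
        intro t _
        rw [← Finset.sum_add_distrib]
        apply Finset.sum_congr rfl
        intro i _
        ring
      rw [heq, hZT, hV0, hDsum]
      linarith
  -- each compensator term is integrable with zero mean
  set G : ℕ → MeasurableSpace Ω := fun t => ℱ t ⊔ (⨆ i' : Fin I, ⨆ t' ∈ Finset.Iio t,
    MeasurableSpace.comap (X i' t') inferInstance) with hGdef
  have hG_le : ∀ t, G t ≤ (inferInstance : MeasurableSpace Ω) := by
    intro t
    simp only [hGdef]
    apply sup_le (ℱ.le t)
    apply iSup_le; intro i'
    apply iSup_le; intro t'
    apply iSup_le; intro _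
    exact measurable_iff_comap_le.mp (hX_meas i' t')
  have hX_cond' : ∀ i, ∀ t ∈ Finset.Icc 1 T, μ[X i t | G t] =ᵐ[μ] p i t :=
    fun i t ht => by simpa only [hGdef] using hX_cond i t ht
  have hF_le_G : ∀ t, (ℱ t : MeasurableSpace Ω) ≤ G t := by
    intro t; simp only [hGdef]; exact le_sup_left
  have hcomap_le : ∀ t, ∀ (i' : Fin I), ∀ t', t' < t →
      MeasurableSpace.comap (X i' t') inferInstance ≤ G t := by
    intro t i' t' hlt
    simp only [hGdef]
    refine le_trans ?_ le_sup_right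
    exact le_trans (le_iSup₂_of_le t' (Finset.mem_Iio.mpr hlt) le_rfl)
      (le_iSup (fun i'' => ⨆ t'' ∈ Finset.Iio t, MeasurableSpace.comap (X i'' t'') inferInstance) i')
  have hSG_meas : ∀ t, ∀ t' ∈ Finset.Icc 1 T, t' < t → t' ≤ t → Measurable[G t] (S t') := by
    intro t t' ht' hlt hle
    apply Finset.measurable_sum
    intro i _
    have hX' : Measurable[G t] (X i t') :=
      (measurable_iff_comap_le.mpr le_rfl).mono (hcomap_le t i t' hlt) le_rfl
    have hh' : Measurable[G t] (h t') :=
      (hh_measF t' ht').mono ((ℱ.mono hle).trans (hF_le_G t)) le_rfl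
    exact hX'.mul (Measurable.ite (measurableSet_le hh' measurable_const)
      measurable_const measurable_const)
  have hindic : ∀ t ∈ Finset.Icc 1 T, MeasurableSet[G t] {ω | t ≤ τ ω} := by
    intro t ht
    have hset : {ω | t ≤ τ ω}
        = ⋂ t' ∈ Finset.Icc 1 T, ⋂ (_ : t' < t), {ω | S t' ω = 1}ᶜ := by
      ext ω
      simp only [Set.mem_setOf_eq, Set.mem_iInter, Set.mem_compl_iff]
      exact hle_iff t ht ω
    rw [hset]
    exact Finset.measurableSet_biInter _ fun t' ht' =>
      MeasurableSet.iInter fun hlt =>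
        ((hSG_meas t t' ht' hlt (le_of_lt hlt)) (measurableSet_singleton 1)).compl
  have hDkey : ∀ t ∈ Finset.Icc 1 T, Integrable (D t) μ ∧ ∫ ω, D t ω ∂μ = 0 := by
    intro t ht
    set c : Fin I → Ω → ℝ :=
      fun i ω => (if t ≤ τ ω then (1 : ℝ) else 0) * max (r i t - h t ω) 0 with hcdef
    have hc_measG : ∀ i, Measurable[G t] (c i) := by
      intro i
      simp only [hcdef]
      have hh' : Measurable[G t] (h t) := (hh_measF t ht).mono (hF_le_G t) le_rfl
      exact (Measurable.ite (hindic t ht) measurable_const measurable_const).mul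
        ((measurable_const.sub hh').max measurable_const)
    have hc_meas : ∀ i, Measurable (c i) := fun i => (hc_measG i).mono (hG_le t) le_rfl
    have hc_bound : ∀ i, ∀ᵐ ω ∂μ, |c i ω| ≤ r i t := by
      intro i
      filter_upwards [hh_ae t ht] with ω hω
      simp only [hcdef]
      rw [abs_mul]
      have h1 : |if t ≤ τ ω then (1 : ℝ) else 0| ≤ 1 := by split <;> simp
      have h2 : |max (r i t - h t ω) 0| ≤ r i t := by
        rw [abs_of_nonneg (le_max_right _ _)]
        exact max_le (by linarith [hω.1]) (hr i t)
      calc |if t ≤ τ ω then (1 : ℝ) else 0| * |max (r i t - h t ω) 0|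
          ≤ 1 * (r i t) := mul_le_mul h1 h2 (abs_nonneg _) zero_le_one
        _ = r i t := one_mul _
    have hX_int : ∀ i, Integrable (X i t) μ := by
      intro i
      refine ⟨(hX_meas i t).aestronglyMeasurable,
        HasFiniteIntegral.of_bounded (C := 1) (Filter.Eventually.of_forall fun ω => ?_)⟩
      rcases hX01 i t ω with hx | hx <;> simp [hx]
    have hXb : ∀ i ω, |X i t ω| ≤ 1 := by
      intro i ω; rcases hX01 i t ω with hx | hx <;> simp [hx]
    have hpb : ∀ i ω, |p i t ω| ≤ 1 := by
      intro i ω; rw [abs_le]; constructor <;> linarith [(hp01 i t ω).1, (hp01 i t ω).2]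
    have hcX_int : ∀ i, Integrable (c i * X i t) μ := by
      intro i
      refine ⟨((hc_meas i).mul (hX_meas i t)).aestronglyMeasurable,
        HasFiniteIntegral.of_bounded (C := r i t) ?_⟩
      filter_upwards [hc_bound i] with ω hω
      rw [Pi.mul_apply, Real.norm_eq_abs, abs_mul]
      calc |c i ω| * |X i t ω| ≤ (r i t) * 1 :=
            mul_le_mul hω (hXb i ω) (abs_nonneg _) (hr i t)
        _ = r i t := mul_one _
    have hcp_int : ∀ i, Integrable (fun ω => c i ω * p i t ω) μ := by
      intro i
      refine ⟨((hc_meas i).mul (hp_meas' i t ht)).aestronglyMeasurable,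
        HasFiniteIntegral.of_bounded (C := r i t) ?_⟩
      filter_upwards [hc_bound i] with ω hω
      rw [Real.norm_eq_abs, abs_mul]
      calc |c i ω| * |p i t ω| ≤ (r i t) * 1 :=
            mul_le_mul hω (hpb i ω) (abs_nonneg _) (hr i t)
        _ = r i t := mul_one _
    have hint_eq : ∀ i, ∫ ω, c i ω * X i t ω ∂μ = ∫ ω, c i ω * p i t ω ∂μ := by
      intro i
      have hmul : μ[c i * X i t | G t] =ᵐ[μ] c i * μ[X i t | G t] :=
        condExp_mul_of_stronglyMeasurable_left ((hc_measG i).stronglyMeasurable)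
          (hcX_int i) (hX_int i)
      calc ∫ ω, c i ω * X i t ω ∂μ = ∫ ω, (c i * X i t) ω ∂μ := rfl
        _ = ∫ ω, (μ[c i * X i t | G t]) ω ∂μ := (integral_condExp (hG_le t)).symm
        _ = ∫ ω, c i ω * p i t ω ∂μ := by
            apply integral_congr_ae
            filter_upwards [hmul, hX_cond' i t ht] with ω hω1 hω2
            rw [hω1, Pi.mul_apply, hω2]
    have hfact : ∀ i : Fin I,
        Integrable (fun ω => c i ω * (X i t ω - p i t ω)) μ ∧
        ∫ ω, c i ω * (X i t ω - p i t ω) ∂μ = 0 := by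
      intro i
      have heqf : (fun ω => c i ω * (X i t ω - p i t ω))
          = fun ω => c i ω * X i t ω - c i ω * p i t ω := by
        funext ω; ring
      constructor
      · rw [heqf]
        exact ((hcX_int i).sub (hcp_int i))
      · calc ∫ ω, c i ω * (X i t ω - p i t ω) ∂μ
            = ∫ ω, (c i ω * X i t ω - c i ω * p i t ω) ∂μ := by rw [heqf]
          _ = (∫ ω, c i ω * X i t ω ∂μ) - ∫ ω, c i ω * p i t ω ∂μ :=
              integral_sub (hcX_int i) (hcp_int i)
          _ = 0 := by rw [hint_eq i]; ring
    have hDeq : D t = fun ω => ∑ i, c i ω * (X i t ω - p i t ω) := by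
      funext ω
      simp only [hDdef, hcdef]
    constructor
    · rw [hDeq]
      exact integrable_finset_sum _ fun i _ => (hfact i).1
    · rw [hDeq]
      rw [integral_finset_sum _ fun i _ => (hfact i).1]
      exact Finset.sum_eq_zero fun i _ => (hfact i).2
  have hD_int : ∀ t ∈ Finset.Icc 1 T, Integrable (D t) μ :=
    fun t ht => (hDkey t ht).1
  have hD_zero : ∀ t ∈ Finset.Icc 1 T, ∫ ω, D t ω ∂μ = 0 :=
    fun t ht => (hDkey t ht).2
  -- conclusion
  have hsum_int : Integrable (fun ω => ∑ t ∈ Finset.Icc 1 T, D t ω) μ :=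
    integrable_finset_sum _ fun t ht => hD_int t ht
  have h1 : ∫ ω, Z (τ ω) ω ∂μ = ∫ ω, (VSTP ω - ∑ t ∈ Finset.Icc 1 T, D t ω) ∂μ :=
    integral_congr_ae hae
  rw [h1, integral_sub hV_int hsum_int, integral_finset_sum _ fun t ht => hD_int t ht]
  have : ∑ t ∈ Finset.Icc 1 T, ∫ ω, D t ω ∂μ = 0 :=
    Finset.sum_eq_zero fun t ht => hD_zero t ht
  rw [this, sub_zero]
end

section
/- Half-LP lower bound for the online matching algorithm's routed reward: in the two-sided matching model, if x* is any optimal solution of the deterministic LP and p_{ijts}(M) are the routing probabilities built from x*, then Σ_{i,j,t,s} r_{ijts} · E[ p_{ijts}(M) ] ≥ (1/2) · LP* ≥ (1/2) · E[V^OFF(Λ,M)]. -/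
/-!
Fix an offline type `(i, t)` and an online type `(j, s)` with `s ≤ t`. On the event `M_js = 1`
the load is `A_it = c + B` with `c = x*_ijts / μ_js ≤ λ_it` and `B` the contribution of the other
online types, so the routing factor `min(λ, A) / A` is at least `λ / (λ + B) ≥ 3/4 - B / (4λ)`.
Since `M_js` is independent of the other arrivals, `E[M_js B] = μ_js Σ' x* ≤ μ_js λ`, and hence
`E[p_ijts] ≥ x*_ijts / 2`; summing against `r` gives `LP* / 2`.

For the second inequality, an optimal offline solution depends only on the finitely many values
of `(Λ, M)`, so it can be selected measurably. Its expectation is feasible for the deterministic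
LP, the product constraint because `E[Λ_it M_js] = λ_it μ_js` by independence; hence
`E[V^OFF] ≤ LP*`.
-/

open MeasureTheory ProbabilityTheory

section

variable {Ω : Type*} [MeasurableSpace Ω] {P : Measure Ω} {X : Ω → ℝ}

lemma integrable_of_zero_or_one [IsFiniteMeasure P] (hX : Measurable X)
    (h01 : ∀ ω, X ω = 0 ∨ X ω = 1) : Integrable X P :=
  .of_bound hX.aestronglyMeasurable 1 <| ae_of_all _ fun ω => by
    rcases h01 ω with h | h <;> simp [h]

lemma integral_eq_measureReal_of_zero_or_one (hX : Measurable X)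
    (h01 : ∀ ω, X ω = 0 ∨ X ω = 1) : ∫ ω, X ω ∂P = P.real {ω | X ω = 1} := by
  have hind : ∀ ω, X ω = {ω | X ω = 1}.indicator 1 ω := fun ω => by
    rcases h01 ω with h | h <;> simp [h]
  rw [integral_congr_ae (ae_of_all _ hind)]
  exact integral_indicator_one (hX (measurableSet_singleton 1))

lemma integral_sum_sum {α β : Type*} [Fintype α] [Fintype β] {f : α → β → Ω → ℝ}
    (hf : ∀ a b, Integrable (f a b) P) :
    ∫ ω, ∑ a, ∑ b, f a b ω ∂P = ∑ a, ∑ b, ∫ ω, f a b ω ∂P := by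
  rw [integral_finsetSum _ fun a _ => integrable_finsetSum _ fun b _ => hf a b]
  exact Finset.sum_congr rfl fun a _ => integral_finsetSum _ fun b _ => hf a b

lemma integrable_min_div_mul {f g : Ω → ℝ} {l : ℝ} (hl : 0 ≤ l) (hf : Measurable f)
    (hf_nonneg : ∀ ω, 0 ≤ f ω) (hg : Integrable g P) :
    Integrable (fun ω => min l (f ω) / f ω * g ω) P := by
  refine hg.bdd_mul (Measurable.aestronglyMeasurable (by fun_prop)) (c := 1) (ae_of_all _ ?_)
  intro ω
  rw [Real.norm_of_nonneg (div_nonneg (le_min hl (hf_nonneg ω)) (hf_nonneg ω))]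
  exact div_le_one_of_le₀ (min_le_right _ _) (hf_nonneg ω)

end

/-- `3/4 - B/(4l)` is the tangent line at `B = l` of the convex function `B ↦ l/(l + B)`. -/
lemma tangent_mul_le_min_div_mul {l c B : ℝ} (hl : 0 < l) (hc : 0 ≤ c) (hcl : c ≤ l)
    (hB : 0 ≤ B) : (3 / 4 - B / (4 * l)) * c ≤ min l (c + B) / (c + B) * c := by
  rcases hc.eq_or_lt with rfl | hc
  · simp
  refine mul_le_mul_of_nonneg_right ?_ hc.le
  have h_tangent : 3 / 4 - B / (4 * l) ≤ l / (l + B) := by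
    rw [sub_le_iff_le_add, div_add_div _ _ (by positivity) (by positivity),
      le_div_iff₀ (by positivity)]
    nlinarith [sq_nonneg (l - B)]
  refine h_tangent.trans ?_
  rcases le_total l (c + B) with h | h
  · rw [min_eq_left h]
    gcongr
  · rw [min_eq_right h, div_self (by positivity)]
    exact div_le_one_of_le₀ (by linarith) (by positivity)

lemma half_le_tangent_mean {l m y σ : ℝ} (hl : 0 < l) (hm : 0 < m) (hy : 0 ≤ y) (hσ : σ ≤ l) :
    y / 2 ≤ (3 / 4 * m - m * σ / (4 * l)) * (y / m) := by
  have hσ' : σ / (4 * l) ≤ 1 / 4 := by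
    rw [div_le_iff₀ (by positivity)]
    linarith
  have hfactor : (3 / 4 * m - m * σ / (4 * l)) * (y / m) = y * (3 / 4 - σ / (4 * l)) := by
    field_simp
  rw [hfactor]
  nlinarith

section Routing

variable {Ω κ : Type*} [MeasurableSpace Ω] {P : Measure Ω} {M : κ → Ω → ℝ} {m y : κ → ℝ}

lemma integral_mul_sum_mul_div (S : Finset κ) (k : κ) (hMint : ∀ k, Integrable (M k) P)
    (hm : ∀ k, ∫ ω, M k ω ∂P = m k) (hm_ne : ∀ k' ∈ S, m k' ≠ 0)
    (hindep : ∀ k' ∈ S, IndepFun (M k) (M k') P) :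
    ∫ ω, M k ω * ∑ k' ∈ S, M k' ω * y k' / m k' ∂P = m k * ∑ k' ∈ S, y k' := by
  have hterm : ∀ k' ∈ S, ∫ ω, M k ω * (M k' ω * y k' / m k') ∂P = m k * y k' := by
    intro k' hk'
    simp_rw [mul_div_assoc, ← mul_assoc]
    rw [integral_mul_const, (hindep k' hk').integral_fun_mul_eq_mul_integral
      (hMint k).aestronglyMeasurable (hMint k').aestronglyMeasurable, hm, hm]
    field_simp [hm_ne k' hk']
  have hint : ∀ k' ∈ S, Integrable (fun ω => M k ω * (M k' ω * y k' / m k')) P := by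
    intro k' hk'
    simp_rw [mul_div_assoc, ← mul_assoc]
    exact ((hindep k' hk').integrable_mul (hMint k) (hMint k')).mul_const _
  simp_rw [Finset.mul_sum]
  rw [integral_finsetSum S hint]
  exact Finset.sum_congr rfl hterm

theorem half_le_integral_routing [IsProbabilityMeasure P] [DecidableEq κ] {S : Finset κ} {k : κ}
    {l : ℝ} (hM : ∀ k, Measurable (M k)) (hM01 : ∀ k ω, M k ω = 0 ∨ M k ω = 1)
    (hm : ∀ k, ∫ ω, M k ω ∂P = m k) (hm_pos : ∀ k, 0 < m k) (hl : 0 < l) (hy : ∀ k, 0 ≤ y k)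
    (hyS : ∑ k' ∈ S, y k' ≤ l) (hyk : y k ≤ l * m k) (hk : k ∈ S)
    (hindep : ∀ k' ∈ S.erase k, IndepFun (M k) (M k') P) {A : Ω → ℝ}
    (hA : ∀ ω, A ω = ∑ k' ∈ S, M k' ω * y k' / m k') :
    y k / 2 ≤ ∫ ω, (if A ω = 0 then 0 else min l (A ω) / A ω * (M k ω * y k / m k)) ∂P := by
  set c := y k / m k
  set B : Ω → ℝ := fun ω => ∑ k' ∈ S.erase k, M k' ω * y k' / m k'
  have hMint : ∀ k, Integrable (M k) P := fun k => integrable_of_zero_or_one (hM k) (hM01 k)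
  have hM_nonneg : ∀ k ω, 0 ≤ M k ω := fun k ω => by rcases hM01 k ω with h | h <;> simp [h]
  have hB_nonneg : ∀ ω, 0 ≤ B ω := fun ω =>
    Finset.sum_nonneg fun k' _ => div_nonneg (mul_nonneg (hM_nonneg k' ω) (hy k')) (hm_pos k').le
  have hc : 0 ≤ c := div_nonneg (hy k) (hm_pos k).le
  have hsplit : ∀ ω, A ω = M k ω * c + B ω := fun ω => by
    rw [hA, ← Finset.add_sum_erase S _ hk, mul_div_assoc]
  have hp : ∀ ω, (if A ω = 0 then 0 else min l (A ω) / A ω * (M k ω * y k / m k)) =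
      min l (M k ω * c + B ω) / (M k ω * c + B ω) * (M k ω * c) := fun ω => by
    rw [← hsplit]
    split_ifs with h <;> simp [h, c, mul_div_assoc]
  have hpointwise : ∀ ω, (3 / 4 * M k ω - M k ω * B ω / (4 * l)) * c ≤
      min l (M k ω * c + B ω) / (M k ω * c + B ω) * (M k ω * c) := fun ω => by
    rcases hM01 k ω with h | h
    · simp [h]
    · have := tangent_mul_le_min_div_mul hl hc
        (div_le_of_le_mul₀ (hm_pos k).le hl.le hyk) (hB_nonneg ω)
      simpa only [h, one_mul, mul_one] using this
  have hBint : Integrable (fun ω => M k ω * B ω) P :=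
    (integrable_finsetSum _ fun k' _ => ((hMint k').mul_const _).div_const _).bdd_mul
      (hM k).aestronglyMeasurable (c := 1)
      (ae_of_all _ fun ω => by rcases hM01 k ω with h | h <;> simp [h])
  have hpint : Integrable
      (fun ω => min l (M k ω * c + B ω) / (M k ω * c + B ω) * (M k ω * c)) P :=
    integrable_min_div_mul hl.le (by fun_prop)
      (fun ω => add_nonneg (mul_nonneg (hM_nonneg k ω) hc) (hB_nonneg ω)) ((hMint k).mul_const c)
  have hMB : ∫ ω, M k ω * B ω ∂P = m k * ∑ k' ∈ S.erase k, y k' :=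
    integral_mul_sum_mul_div _ k hMint hm (fun k' _ => (hm_pos k').ne') hindep
  have hyS' : ∑ k' ∈ S.erase k, y k' ≤ l :=
    (Finset.sum_le_sum_of_subset_of_nonneg (S.erase_subset k) fun k' _ _ => hy k').trans hyS
  simp_rw [hp]
  calc y k / 2 ≤ (3 / 4 * m k - m k * (∑ k' ∈ S.erase k, y k') / (4 * l)) * c :=
        half_le_tangent_mean hl (hm_pos k) (hy k) hyS'
    _ = ∫ ω, (3 / 4 * M k ω - M k ω * B ω / (4 * l)) * c ∂P := by
        rw [integral_mul_const, integral_sub ((hMint k).const_mul _) (hBint.div_const _),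
          integral_const_mul, integral_div, hm, hMB]
    _ ≤ _ := integral_mono ((((hMint k).const_mul _).sub (hBint.div_const _)).mul_const _) hpint
        hpointwise

end Routing

lemma exists_measurable_forall_of_countable_range {Ω β γ : Type*} [MeasurableSpace Ω]
    [MeasurableSpace β] [MeasurableSingletonClass β] [MeasurableSpace γ] {π : Ω → β}
    (hπ : Measurable π) (hrange : (Set.range π).Countable) {Q : β → γ → Prop}
    (hQ : ∀ ω, ∃ x, Q (π ω) x) : ∃ X : Ω → γ, Measurable X ∧ ∀ ω, Q (π ω) (X ω) := by
  have := hrange.to_subtype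
  have hQ' : ∀ b : Set.range π, ∃ x, Q b x := by
    rintro ⟨_, ω, rfl⟩
    exact hQ ω
  choose G hG using hQ'
  exact ⟨G ∘ Set.rangeFactorization π, (measurable_of_countable G).comp hπ.subtype_mk,
    fun ω => hG (Set.rangeFactorization π ω)⟩

namespace MatchingLP

variable {Ω ι κ τ : Type*} [MeasurableSpace Ω] {P : Measure Ω} [Fintype ι] [Fintype κ] [Fintype τ]

def Feasible [LT τ] (a : ι → τ → ℝ) (b : κ → τ → ℝ) (x : ι → κ → τ → τ → ℝ) : Prop :=
  (∀ i j t s, 0 ≤ x i j t s) ∧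
  (∀ j s, ∑ i, ∑ t, x i j t s ≤ b j s) ∧
  (∀ i t, ∑ j, ∑ s, x i j t s ≤ a i t) ∧
  (∀ i j t s, x i j t s ≤ a i t * b j s) ∧
  (∀ i j t s, t < s → x i j t s = 0)

def reward (r x : ι → κ → τ → τ → ℝ) : ℝ := ∑ i, ∑ j, ∑ t, ∑ s, x i j t s * r i j t s

def rewards [LT τ] (r : ι → κ → τ → τ → ℝ) (a : ι → τ → ℝ) (b : κ → τ → ℝ) : Set ℝ :=
  {v | ∃ x, Feasible a b x ∧ v = reward r x}

lemma integral_reward (r : ι → κ → τ → τ → ℝ) {X : Ω → ι → κ → τ → τ → ℝ}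
    (hX : ∀ i j t s, Integrable (fun ω => X ω i j t s) P) :
    ∫ ω, reward r (X ω) ∂P = reward r fun i j t s => ∫ ω, X ω i j t s ∂P := by
  have hterm : ∀ i j t s, Integrable (fun ω => X ω i j t s * r i j t s) P :=
    fun i j t s => (hX i j t s).mul_const _
  unfold reward
  rw [integral_sum_sum fun i j =>
    integrable_finsetSum _ fun t _ => integrable_finsetSum _ fun s _ => hterm i j t s]
  simp_rw [integral_sum_sum (hterm _ _), integral_mul_const]

lemma feasible_integral [LT τ] {Λ : ι → τ → Ω → ℝ} {M : κ → τ → Ω → ℝ} {a : ι → τ → ℝ}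
    {b : κ → τ → ℝ} {X : Ω → ι → κ → τ → τ → ℝ}
    (hΛint : ∀ i t, Integrable (Λ i t) P) (hMint : ∀ j s, Integrable (M j s) P)
    (hΛ : ∀ i t, ∫ ω, Λ i t ω ∂P = a i t) (hM : ∀ j s, ∫ ω, M j s ω ∂P = b j s)
    (hindep : ∀ i t j s, IndepFun (Λ i t) (M j s) P)
    (hX : ∀ i j t s, Integrable (fun ω => X ω i j t s) P)
    (hfeas : ∀ ω, Feasible (fun i t => Λ i t ω) (fun j s => M j s ω) (X ω)) :
    Feasible a b fun i j t s => ∫ ω, X ω i j t s ∂P := by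
  refine ⟨fun i j t s => integral_nonneg fun ω => (hfeas ω).1 i j t s, fun j s => ?_,
    fun i t => ?_, fun i j t s => ?_, fun i j t s hts => ?_⟩
  · rw [← integral_sum_sum fun i t => hX i j t s, ← hM]
    exact integral_mono (integrable_finsetSum _ fun i _ => integrable_finsetSum _ fun t _ =>
      hX i j t s) (hMint j s) fun ω => (hfeas ω).2.1 j s
  · rw [← integral_sum_sum fun j s => hX i j t s, ← hΛ]
    exact integral_mono (integrable_finsetSum _ fun j _ => integrable_finsetSum _ fun s _ =>
      hX i j t s) (hΛint i t) fun ω => (hfeas ω).2.2.1 i t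
  · rw [← hΛ, ← hM, ← (hindep i t j s).integral_fun_mul_eq_mul_integral
      (hΛint i t).aestronglyMeasurable (hMint j s).aestronglyMeasurable]
    exact integral_mono (hX i j t s) ((hindep i t j s).integrable_mul (hΛint i t) (hMint j s))
      fun ω => (hfeas ω).2.2.2.1 i j t s
  · simp [(hfeas _).2.2.2.2 i j t s hts]

theorem integral_le_of_isGreatest_rewards [LT τ] [IsProbabilityMeasure P]
    {r : ι → κ → τ → τ → ℝ} {Λ : ι → τ → Ω → ℝ} {M : κ → τ → Ω → ℝ} {a : ι → τ → ℝ}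
    {b : κ → τ → ℝ} {V : Ω → ℝ} {L : ℝ}
    (hΛmeas : ∀ i t, Measurable (Λ i t)) (hMmeas : ∀ j s, Measurable (M j s))
    (hΛ01 : ∀ i t ω, Λ i t ω = 0 ∨ Λ i t ω = 1) (hM01 : ∀ j s ω, M j s ω = 0 ∨ M j s ω = 1)
    (hΛ : ∀ i t, ∫ ω, Λ i t ω ∂P = a i t) (hM : ∀ j s, ∫ ω, M j s ω ∂P = b j s)
    (hindep : ∀ i t j s, IndepFun (Λ i t) (M j s) P)
    (hV : ∀ ω, IsGreatest (rewards r (fun i t => Λ i t ω) (fun j s => M j s ω)) (V ω))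
    (hL : L ∈ upperBounds (rewards r a b)) :
    ∫ ω, V ω ∂P ≤ L := by
  have hΛint : ∀ i t, Integrable (Λ i t) P :=
    fun i t => integrable_of_zero_or_one (hΛmeas i t) (hΛ01 i t)
  have hMint : ∀ j s, Integrable (M j s) P :=
    fun j s => integrable_of_zero_or_one (hMmeas j s) (hM01 j s)
  set π : Ω → (ι → τ → ℝ) × (κ → τ → ℝ) := fun ω => (fun i t => Λ i t ω, fun j s => M j s ω)
  have hπ : Measurable π := by fun_prop
  have hrange : (Set.range π).Countable := by
    have h01 : ({0, 1} : Set ℝ).Finite := by simp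
    refine (((Set.Finite.pi fun _ => Set.Finite.pi fun _ => h01).prod
      (Set.Finite.pi fun _ => Set.Finite.pi fun _ => h01)).countable).mono ?_
    rintro _ ⟨ω, rfl⟩
    simp [π, Set.mem_pi, hΛ01, hM01]
  obtain ⟨X, hXmeas, hX⟩ := exists_measurable_forall_of_countable_range hπ hrange
    (Q := fun c x => Feasible c.1 c.2 x ∧ reward r x ∈ upperBounds (rewards r c.1 c.2))
    fun ω => by
      obtain ⟨x, hx, hVx⟩ := (hV ω).1
      exact ⟨x, hx, hVx ▸ (hV ω).2⟩
  have hVX : ∀ ω, V ω = reward r (X ω) := fun ω =>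
    (hV ω).unique ⟨⟨X ω, (hX ω).1, rfl⟩, (hX ω).2⟩
  have hXint : ∀ i j t s, Integrable (fun ω => X ω i j t s) P := fun i j t s =>
    ((hindep i t j s).integrable_mul (hΛint i t) (hMint j s)).mono'
      (Measurable.aestronglyMeasurable (by fun_prop)) <| ae_of_all _ fun ω => by
        rw [Real.norm_of_nonneg ((hX ω).1.1 i j t s)]
        exact (hX ω).1.2.2.2.1 i j t s
  calc ∫ ω, V ω ∂P = ∫ ω, reward r (X ω) ∂P := by simp_rw [hVX]
    _ = reward r fun i j t s => ∫ ω, X ω i j t s ∂P := integral_reward r hXint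
    _ ≤ L := hL ⟨_, feasible_integral hΛint hMint hΛ hM hindep hXint fun ω => (hX ω).1, rfl⟩

end MatchingLP

theorem routed_reward_ge_half_LP_general
    {Ω : Type*} [MeasurableSpace Ω] (μ : Measure Ω) [IsProbabilityMeasure μ]
    (T I J : ℕ)
    (rw : Fin I → Fin J → Fin T → Fin T → ℝ) (hrw : ∀ i j t s, 0 ≤ rw i j t s)
    (Λ : Fin I → Fin T → Ω → ℝ) (M : Fin J → Fin T → Ω → ℝ)
    (hΛmeas : ∀ i t, Measurable (Λ i t)) (hMmeas : ∀ j s, Measurable (M j s))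
    (hΛ01 : ∀ i t ω, Λ i t ω = 0 ∨ Λ i t ω = 1)
    (hM01 : ∀ j s ω, M j s ω = 0 ∨ M j s ω = 1)
    (hindep : iIndepFun
      (m := fun _ : (Fin I × Fin T) ⊕ (Fin J × Fin T) => (inferInstance : MeasurableSpace ℝ))
      (Sum.elim (fun it ω => Λ it.1 it.2 ω) (fun js ω => M js.1 js.2 ω)) μ)
    (lam : Fin I → Fin T → ℝ) (mu : Fin J → Fin T → ℝ)
    (hlam : ∀ i t, (μ {ω | Λ i t ω = 1}).toReal = lam i t)
    (hmu : ∀ j s, (μ {ω | M j s ω = 1}).toReal = mu j s)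
    (hlam_pos : ∀ i t, 0 < lam i t) (hmu_pos : ∀ j s, 0 < mu j s)
    -- offline matching value, for each realization:
    (VOFF : Ω → ℝ)
    (hVOFF : ∀ ω, IsGreatest
      {v : ℝ | ∃ x : Fin I → Fin J → Fin T → Fin T → ℝ,
        (∀ i j t s, 0 ≤ x i j t s) ∧
        (∀ j s, ∑ i, ∑ t, x i j t s ≤ M j s ω) ∧
        (∀ i t, ∑ j, ∑ s, x i j t s ≤ Λ i t ω) ∧
        (∀ i j t s, x i j t s ≤ Λ i t ω * M j s ω) ∧
        (∀ i j t s, t < s → x i j t s = 0) ∧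
        v = ∑ i, ∑ j, ∑ t, ∑ s, x i j t s * rw i j t s} (VOFF ω))
    -- LP value and an optimal solution x*:
    (LPstar : ℝ) (xstar : Fin I → Fin J → Fin T → Fin T → ℝ)
    (hLPstar : IsGreatest
      {v : ℝ | ∃ x : Fin I → Fin J → Fin T → Fin T → ℝ,
        (∀ i j t s, 0 ≤ x i j t s) ∧
        (∀ j s, ∑ i, ∑ t, x i j t s ≤ mu j s) ∧
        (∀ i t, ∑ j, ∑ s, x i j t s ≤ lam i t) ∧
        (∀ i j t s, x i j t s ≤ lam i t * mu j s) ∧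
        (∀ i j t s, t < s → x i j t s = 0) ∧
        v = ∑ i, ∑ j, ∑ t, ∑ s, x i j t s * rw i j t s} LPstar)
    (hxstar_nonneg : ∀ i j t s, 0 ≤ xstar i j t s)
    (hxstar_lam : ∀ i t, ∑ j, ∑ s, xstar i j t s ≤ lam i t)
    (hxstar_prod : ∀ i j t s, xstar i j t s ≤ lam i t * mu j s)
    (hxstar_zero : ∀ i j t s, t < s → xstar i j t s = 0)
    (hxstar_opt : ∑ i, ∑ j, ∑ t, ∑ s, xstar i j t s * rw i j t s = LPstar)
    -- routing probabilities built from x*: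
    (A : Fin I → Fin T → Ω → ℝ)
    (hA : ∀ i t ω, A i t ω = ∑ j', ∑ s' ∈ Finset.Iic t, M j' s' ω * xstar i j' t s' / mu j' s')
    (p : Fin I → Fin J → Fin T → Fin T → Ω → ℝ)
    (hp : ∀ i j t s ω, p i j t s ω =
      if A i t ω = 0 then 0
      else (min (lam i t) (A i t ω) / A i t ω) * (M j s ω * xstar i j t s / mu j s)) :
    (1 / 2 : ℝ) * LPstar ≤ ∑ i, ∑ j, ∑ t, ∑ s, rw i j t s * ∫ ω, p i j t s ω ∂μ ∧
    (1 / 2 : ℝ) * ∫ ω, VOFF ω ∂μ ≤ (1 / 2 : ℝ) * LPstar := by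
  have hΛmean : ∀ i t, ∫ ω, Λ i t ω ∂μ = lam i t := fun i t =>
    (integral_eq_measureReal_of_zero_or_one (hΛmeas i t) (hΛ01 i t)).trans (hlam i t)
  have hMmean : ∀ j s, ∫ ω, M j s ω ∂μ = mu j s := fun j s =>
    (integral_eq_measureReal_of_zero_or_one (hMmeas j s) (hM01 j s)).trans (hmu j s)
  have hMindep : ∀ k k' : Fin J × Fin T, k ≠ k' → IndepFun (M k.1 k.2) (M k'.1 k'.2) μ :=
    fun k k' h => hindep.indepFun (i := .inr k) (j := .inr k') (Sum.inr_injective.ne h)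
  have hroute : ∀ i j t s, xstar i j t s / 2 ≤ ∫ ω, p i j t s ω ∂μ := by
    intro i j t s
    rcases lt_or_ge t s with hts | hst
    · simp [hp, hxstar_zero i j t s hts]
    simp_rw [hp]
    refine half_le_integral_routing (M := fun k => M k.1 k.2) (m := fun k => mu k.1 k.2)
      (y := fun k => xstar i k.1 t k.2) (k := (j, s)) (A := A i t) (fun k => hMmeas k.1 k.2)
      (fun k => hM01 k.1 k.2) (fun k => hMmean k.1 k.2) (fun k => hmu_pos k.1 k.2)
      (hlam_pos i t) (fun k => hxstar_nonneg i k.1 t k.2) ?_ (hxstar_prod i j t s)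
      (Finset.mem_product.2 ⟨Finset.mem_univ _, Finset.mem_Iic.2 hst⟩)
      (fun k hk => hMindep (j, s) k (Finset.ne_of_mem_erase hk).symm)
      fun ω => by rw [hA, Finset.sum_product]
    rw [Finset.sum_product]
    exact (Finset.sum_le_sum fun j' _ => Finset.sum_le_sum_of_subset_of_nonneg
      (Finset.subset_univ _) fun s' _ _ => hxstar_nonneg i j' t s').trans (hxstar_lam i t)
  constructor
  · rw [← hxstar_opt]
    simp only [Finset.mul_sum]
    gcongr ∑ i, ∑ j, ∑ t, ∑ s, ?_ with i _ j _ t _ s _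
    linarith [mul_le_mul_of_nonneg_left (hroute i j t s) (hrw i j t s)]
  · have h := MatchingLP.integral_le_of_isGreatest_rewards hΛmeas hMmeas hΛ01 hM01 hΛmean hMmean
      (fun i t j s => hindep.indepFun (i := .inl (i, t)) (j := .inr (j, s)) Sum.inl_ne_inr)
      (r := rw) (V := VOFF) (L := LPstar) ?_ ?_
    · linarith
    · simpa only [MatchingLP.rewards, MatchingLP.Feasible, MatchingLP.reward, and_assoc] using hVOFF
    · simpa only [MatchingLP.rewards, MatchingLP.Feasible, MatchingLP.reward, and_assoc]
        using hLPstar.2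

/-- **Half-LP lower bound for the routed reward.** If `x*` is an optimal solution of the
deterministic LP and `p_{ijts}(M)` are the routing probabilities built from `x*`, then
`Σ_{i,j,t,s} r_{ijts} E[p_{ijts}(M)] ≥ LP*/2 ≥ E[V^OFF(Λ,M)]/2`. -/
theorem routed_reward_ge_half_LP
    {Ω : Type*} [MeasurableSpace Ω] (μ : Measure Ω) [IsProbabilityMeasure μ]
    (T I J : ℕ) (hT : 1 ≤ T) (hI : 1 ≤ I) (hJ : 1 ≤ J)
    (rw : Fin I → Fin J → Fin T → Fin T → ℝ) (hrw : ∀ i j t s, 0 ≤ rw i j t s)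
    (Λ : Fin I → Fin T → Ω → ℝ) (M : Fin J → Fin T → Ω → ℝ)
    (hΛmeas : ∀ i t, Measurable (Λ i t)) (hMmeas : ∀ j s, Measurable (M j s))
    (hΛ01 : ∀ i t ω, Λ i t ω = 0 ∨ Λ i t ω = 1)
    (hM01 : ∀ j s ω, M j s ω = 0 ∨ M j s ω = 1)
    (hindep : iIndepFun
      (m := fun _ : (Fin I × Fin T) ⊕ (Fin J × Fin T) => (inferInstance : MeasurableSpace ℝ))
      (Sum.elim (fun it ω => Λ it.1 it.2 ω) (fun js ω => M js.1 js.2 ω)) μ)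
    (lam : Fin I → Fin T → ℝ) (mu : Fin J → Fin T → ℝ)
    (hlam : ∀ i t, (μ {ω | Λ i t ω = 1}).toReal = lam i t)
    (hmu : ∀ j s, (μ {ω | M j s ω = 1}).toReal = mu j s)
    (hlam_pos : ∀ i t, 0 < lam i t) (hmu_pos : ∀ j s, 0 < mu j s)
    -- offline matching value, for each realization:
    (VOFF : Ω → ℝ)
    (hVOFF : ∀ ω, IsGreatest
      {v : ℝ | ∃ x : Fin I → Fin J → Fin T → Fin T → ℝ,
        (∀ i j t s, 0 ≤ x i j t s) ∧
        (∀ j s, ∑ i, ∑ t, x i j t s ≤ M j s ω) ∧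
        (∀ i t, ∑ j, ∑ s, x i j t s ≤ Λ i t ω) ∧
        (∀ i j t s, x i j t s ≤ Λ i t ω * M j s ω) ∧
        (∀ i j t s, t < s → x i j t s = 0) ∧
        v = ∑ i, ∑ j, ∑ t, ∑ s, x i j t s * rw i j t s} (VOFF ω))
    -- LP value and an optimal solution x*:
    (LPstar : ℝ) (xstar : Fin I → Fin J → Fin T → Fin T → ℝ)
    (hLPstar : IsGreatest
      {v : ℝ | ∃ x : Fin I → Fin J → Fin T → Fin T → ℝ,
        (∀ i j t s, 0 ≤ x i j t s) ∧
        (∀ j s, ∑ i, ∑ t, x i j t s ≤ mu j s) ∧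
        (∀ i t, ∑ j, ∑ s, x i j t s ≤ lam i t) ∧
        (∀ i j t s, x i j t s ≤ lam i t * mu j s) ∧
        (∀ i j t s, t < s → x i j t s = 0) ∧
        v = ∑ i, ∑ j, ∑ t, ∑ s, x i j t s * rw i j t s} LPstar)
    (hxstar_nonneg : ∀ i j t s, 0 ≤ xstar i j t s)
    (hxstar_mu : ∀ j s, ∑ i, ∑ t, xstar i j t s ≤ mu j s)
    (hxstar_lam : ∀ i t, ∑ j, ∑ s, xstar i j t s ≤ lam i t)
    (hxstar_prod : ∀ i j t s, xstar i j t s ≤ lam i t * mu j s)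
    (hxstar_zero : ∀ i j t s, t < s → xstar i j t s = 0)
    (hxstar_opt : ∑ i, ∑ j, ∑ t, ∑ s, xstar i j t s * rw i j t s = LPstar)
    -- routing probabilities built from x*:
    (A : Fin I → Fin T → Ω → ℝ)
    (hA : ∀ i t ω, A i t ω = ∑ j', ∑ s' ∈ Finset.Iic t, M j' s' ω * xstar i j' t s' / mu j' s')
    (p : Fin I → Fin J → Fin T → Fin T → Ω → ℝ)
    (hp : ∀ i j t s ω, p i j t s ω =
      if A i t ω = 0 then 0
      else (min (lam i t) (A i t ω) / A i t ω) * (M j s ω * xstar i j t s / mu j s)) :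
    (1 / 2 : ℝ) * LPstar ≤ ∑ i, ∑ j, ∑ t, ∑ s, rw i j t s * ∫ ω, p i j t s ω ∂μ ∧
    (1 / 2 : ℝ) * ∫ ω, VOFF ω ∂μ ≤ (1 / 2 : ℝ) * LPstar :=
  routed_reward_ge_half_LP_general μ T I J rw hrw Λ M hΛmeas hMmeas hΛ01 hM01 hindep lam mu hlam hmu
    hlam_pos hmu_pos VOFF hVOFF LPstar xstar hLPstar hxstar_nonneg hxstar_lam hxstar_prod
    hxstar_zero hxstar_opt A hA p hp
end
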